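/- arXiv:1511.03738 — 2 statements merged into one kernel-verified Lean document; each statement's English description precedes it below -/
import Mathlib

section
/- Let d = (a,b) be a bidegree sequence with Σ a_n = Σ b_n + 1, and let i, j be indices with a_i, a_j ≥ 1. Let X_{0_i} be the set of residual sequences (a - a_i e_i - e_j, b - s) where s has a_i entries equal to 1 (rest 0), and X_{1_i} those where s has one entry equal to 2 and a_i - 2 entries equal to 1; define X_{0_j}, X_{1_j} analogously from (a - e_i - a_j e_j, b - s) with a_j in place of a_i. Then, assuming the denominators are nonzero, ‖G_{d_{-i}}‖ / ‖G_{d_{-j}}‖ = (a_i/a_j) · (1 + ‖G_{X_{1_i}}‖/(a_i ‖G_{X_{0_i}}‖)) / (1 + ‖G_{X_{1_j}}‖/(a_j ‖G_{X_{0_j}}‖)). -/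
/-!
Deleting column `j` of a graph realizing `(α, β)` leaves the set `S` of in-neighbours of `j`, of
size `α_j`, and a graph with empty column `j` realizing `(α` with `α_j := 0, β - 1_S)`; this is a
bijection. Apply it to the graphs realizing `(a - e_i - e_j, b - e_m)`, for all `m`: the residual
out-degrees are `b - (e_m + 1_S)`. If `m ∈ S`, then `e_m + 1_S` has a single entry `2`, and these
are the sequences of `X_{1_j}`. Otherwise `e_m + 1_S` is the indicator of an `a_j`-set, reached
from `a_j` choices of `m`, and the same bijection turns these into `a_j ‖G_{d_{-i}}‖`. Hence
`a_j ‖G_{d_{-i}}‖ + ‖G_{X_{1_j}}‖` is symmetric in `i` and `j`. Deleting column `i` of the graphs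
realizing `d_{-j}` gives `‖G_{X_{0_i}}‖ = ‖G_{d_{-j}}‖`, and the ratio formula is then algebra.
-/

/-- In-degree of node `v` (edge `u → v` when `A u v = true`); loops allowed. -/
def inDeg {N : ℕ} (A : Fin N → Fin N → Bool) (v : Fin N) : ℕ :=
  (Finset.univ.filter (fun u => A u v = true)).card

/-- Out-degree of node `v`. -/
def outDeg {N : ℕ} (A : Fin N → Fin N → Bool) (v : Fin N) : ℕ :=
  (Finset.univ.filter (fun u => A v u = true)).card

/-- Number of directed graphs (loops allowed, no multi-edges) realizing `(a,b)`. -/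
noncomputable def numGraphs {N : ℕ} (a b : Fin N → ℕ) : ℕ :=
  Nat.card {A : Fin N → Fin N → Bool // ∀ v, inDeg A v = a v ∧ outDeg A v = b v}

/-- Number of directed graphs realizing an integer bidegree sequence. -/
noncomputable def numGraphsZ {N : ℕ} (a b : Fin N → ℤ) : ℕ :=
  Nat.card {A : Fin N → Fin N → Bool //
    ∀ v, (inDeg A v : ℤ) = a v ∧ (outDeg A v : ℤ) = b v}

/-- `‖G_{X_{c_i}}‖`: the number of graphs realizing some residual sequence
`(a - a_i e_i - e_j, b - s)` where `s : Fin N → {0,1,2}` has exactly `c`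
entries equal to `2` and `∑ s = a_i` (so for `c = 0`, `s` has `a_i` ones,
and for `c = 1`, one `2` and `a_i - 2` ones). -/
noncomputable def GXi {N : ℕ} (a b : Fin N → ℕ) (i j : Fin N) (c : ℕ) : ℕ :=
  ∑ s : Fin N → Fin 3,
    (if (Finset.univ.filter (fun n => (s n : ℕ) = 2)).card = c ∧
        (∑ n, (s n : ℕ)) = a i
     then numGraphsZ
            (fun n => if n = i then 0
                      else if n = j then (a n : ℤ) - 1 else (a n : ℤ))
            (fun n => (b n : ℤ) - ((s n : ℕ) : ℤ))
     else 0)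


open Finset

variable {N : ℕ}

def realizers (α β : Fin N → ℤ) : Finset (Fin N → Fin N → Bool) :=
  {A | ∀ v, (inDeg A v : ℤ) = α v ∧ (outDeg A v : ℤ) = β v}

lemma mem_realizers {α β : Fin N → ℤ} {A : Fin N → Fin N → Bool} :
    A ∈ realizers α β ↔ ∀ v, (inDeg A v : ℤ) = α v ∧ (outDeg A v : ℤ) = β v := by
  simp [realizers]

lemma numGraphsZ_eq_card_realizers (α β : Fin N → ℤ) :
    numGraphsZ α β = #(realizers α β) := by
  rw [numGraphsZ, Nat.card_eq_fintype_card, Fintype.card_subtype, realizers]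

lemma numGraphs_eq_numGraphsZ (a b : Fin N → ℕ) :
    numGraphs a b = numGraphsZ (fun n => a n) (fun n => b n) := by
  simp only [numGraphs, numGraphsZ, Nat.cast_inj]

def col (A : Fin N → Fin N → Bool) (k : Fin N) : Finset (Fin N) := {u | A u k = true}

def setCol (A : Fin N → Fin N → Bool) (k : Fin N) (S : Finset (Fin N)) :
    Fin N → Fin N → Bool :=
  fun u v => if v = k then decide (u ∈ S) else A u v

section setCol

variable (A : Fin N → Fin N → Bool) (k : Fin N) (S : Finset (Fin N))

lemma inDeg_eq_card_col : inDeg A k = #(col A k) := rfl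

lemma col_setCol : col (setCol A k S) k = S := by
  ext u; simp [col, setCol]

lemma inDeg_setCol_of_ne {v : Fin N} (hv : v ≠ k) : inDeg (setCol A k S) v = inDeg A v := by
  simp [inDeg, setCol, hv]

lemma outDeg_setCol (u : Fin N) :
    (outDeg (setCol A k S) u : ℤ) =
      outDeg A u - (if A u k then 1 else 0) + (if u ∈ S then 1 else 0) := by
  have hrest : ∑ v ∈ univ.erase k, (if setCol A k S u v then 1 else 0)
      = ∑ v ∈ univ.erase k, (if A u v then (1 : ℤ) else 0) :=
    sum_congr rfl fun v hv => by simp [setCol, ne_of_mem_erase hv]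
  simp only [outDeg, card_filter, Nat.cast_sum, Nat.cast_ite, Nat.cast_one, Nat.cast_zero]
  rw [← sum_erase_add _ _ (mem_univ k), ← sum_erase_add _ _ (mem_univ k), hrest]
  simp [setCol]

lemma setCol_setCol (T : Finset (Fin N)) : setCol (setCol A k S) k T = setCol A k T := by
  funext u v; by_cases hv : v = k <;> simp [setCol, hv]

lemma setCol_col : setCol A k (col A k) = A := by
  funext u v; by_cases hv : v = k <;> simp [setCol, col, hv]

end setCol

lemma col_eq_empty_of_mem_realizers {α β : Fin N → ℤ} {A : Fin N → Fin N → Bool}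
    {k : Fin N} (hA : A ∈ realizers α β) (hk : α k = 0) : col A k = ∅ := by
  have h := (mem_realizers.mp hA k).1
  rw [hk, inDeg_eq_card_col] at h
  exact card_eq_zero.mp (by exact_mod_cast h)

lemma card_filter_col_realizers (α β : Fin N → ℤ) (k : Fin N) (S : Finset (Fin N))
    (hS : (#S : ℤ) = α k) :
    #{K ∈ realizers α β | col K k = S} =
      #(realizers (Function.update α k 0) (fun u => β u - if u ∈ S then 1 else 0)) := by
  apply card_nbij' (fun K => setCol K k ∅) (fun A => setCol A k S)
  · rintro K hK
    simp only [coe_filter, Set.mem_ofPred_eq, mem_coe, mem_realizers] at hK ⊢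
    obtain ⟨hK, rfl⟩ := hK
    refine fun v => ⟨?_, by simp [outDeg_setCol, (hK v).2, col]⟩
    by_cases hv : v = k
    · subst hv; simp [inDeg_eq_card_col, col_setCol]
    · rw [inDeg_setCol_of_ne _ _ _ hv, Function.update_of_ne hv, (hK v).1]
  · intro A hA
    have hcol := col_eq_empty_of_mem_realizers hA (Function.update_self k 0 α)
    simp only [coe_filter, Set.mem_ofPred_eq, mem_coe, mem_realizers] at hA ⊢
    refine ⟨fun v => ⟨?_, ?_⟩, col_setCol _ _ _⟩
    · by_cases hv : v = k
      · subst hv; rw [inDeg_eq_card_col, col_setCol, hS]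
      · rw [inDeg_setCol_of_ne _ _ _ hv, (hA v).1, Function.update_of_ne hv]
    · have hAv : A v k = false := by simpa [col] using Finset.ext_iff.mp hcol v
      simp [outDeg_setCol, (hA v).2, hAv]
  · intro K hK
    simp only [coe_filter, Set.mem_ofPred_eq] at hK
    simp only [setCol_setCol, ← hK.2, setCol_col]
  · intro A hA
    have hcol := col_eq_empty_of_mem_realizers hA (Function.update_self k 0 α)
    simp only [setCol_setCol, ← hcol, setCol_col]

lemma card_realizers_eq_sum_powersetCard (α β : Fin N → ℤ) (k : Fin N) (d : ℕ)
    (hd : α k = d) :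
    #(realizers α β) = ∑ S ∈ powersetCard d univ,
      #(realizers (Function.update α k 0) (fun u => β u - if u ∈ S then 1 else 0)) := by
  rw [card_eq_sum_card_fiberwise (f := fun K => col K k) (t := powersetCard d univ)]
  · refine sum_congr rfl fun S hS => card_filter_col_realizers α β k S ?_
    rw [hd, (mem_powersetCard.mp hS).2]
  · intro K hK
    simp only [mem_coe, mem_realizers, mem_powersetCard, subset_univ, true_and] at hK ⊢
    exact_mod_cast (inDeg_eq_card_col K k ▸ (hK k).1).trans hd

lemma val_ite_one_zero (p : Prop) [Decidable p] :
    ((if p then (1 : Fin 3) else 0 : Fin 3) : ℕ) = if p then 1 else 0 := by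
  split_ifs <;> rfl

section Fin3Vectors

variable {ι M : Type*} [DecidableEq ι]

lemma single_add_indicator_of_notMem {m : ι} {S : Finset ι} (hm : m ∉ S) :
    (Pi.single m 1 + fun u => if u ∈ S then 1 else 0 : ι → ℤ) =
      fun u => if u ∈ insert m S then 1 else 0 := by
  funext u
  by_cases hu : u = m
  · subst hu; simp [hm]
  · simp [hu]

/-- The vector `e_m + 1_S` when `m ∈ S`. -/
def twoAt (m : ι) (S : Finset ι) : ι → Fin 3 :=
  fun u => if u = m then 2 else if u ∈ S then 1 else 0

lemma val_twoAt {m : ι} {S : Finset ι} (hm : m ∈ S) (u : ι) :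
    (twoAt m S u : ℕ) = (if u = m then 1 else 0) + if u ∈ S then 1 else 0 := by
  by_cases hu : u = m
  · subst hu; simp [twoAt, hm]
  · simp only [twoAt, hu, if_false, zero_add]; split_ifs <;> rfl

lemma val_twoAt_eq_two_iff {m u : ι} {S : Finset ι} : (twoAt m S u : ℕ) = 2 ↔ u = m := by
  unfold twoAt; split_ifs <;> simp_all

lemma twoAt_injOn {m m' : ι} {S S' : Finset ι} (hm : m ∈ S) (hm' : m' ∈ S')
    (h : twoAt m S = twoAt m' S') : m = m' ∧ S = S' := by
  obtain rfl : m = m' := val_twoAt_eq_two_iff.mp (h ▸ val_twoAt_eq_two_iff.mpr rfl)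
  refine ⟨rfl, Finset.ext fun u => ?_⟩
  have := congrArg Fin.val (congrFun h u)
  rw [val_twoAt hm, val_twoAt hm'] at this
  split_ifs at this <;> simp_all

variable [Fintype ι] [AddCommMonoid M]

lemma sum_val_twoAt {m : ι} {S : Finset ι} (hm : m ∈ S) :
    ∑ u, (twoAt m S u : ℕ) = #S + 1 := by
  simp [val_twoAt hm, sum_add_distrib, add_comm]

lemma eq_twoAt {s : ι → Fin 3} {m : ι} (h2 : ∀ u, (s u : ℕ) = 2 ↔ u = m) :
    s = twoAt m {u | 1 ≤ (s u : ℕ)} := by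
  funext u
  apply Fin.ext
  have := (s u).isLt
  by_cases hu : u = m
  · subst hu; simp [twoAt, (h2 u).mpr rfl]
  · have := mt (h2 u).mp hu
    simp only [twoAt, hu, if_false, mem_filter, mem_univ, true_and]
    split_ifs <;> simp <;> omega

lemma sum_fin3_noTwo_eq_sum_powersetCard (g : (ι → ℤ) → M) (n : ℕ) :
    ∑ s : ι → Fin 3 with #{u | (s u : ℕ) = 2} = 0 ∧ ∑ u, (s u : ℕ) = n,
        g (fun u => ((s u : ℕ) : ℤ)) =
      ∑ S ∈ powersetCard n univ, g (fun u => if u ∈ S then 1 else 0) := by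
  have noTwo {s : ι → Fin 3} (hs : #{u | (s u : ℕ) = 2} = 0) (u : ι) :
      (s u : ℕ) ≤ 1 := by
    have : (s u : ℕ) ≠ 2 := by simp [filter_eq_empty_iff] at hs; exact @hs u
    have := (s u).isLt
    omega
  apply sum_nbij' (fun s : ι → Fin 3 => ({u | (s u : ℕ) = 1} : Finset ι))
    (fun (S : Finset ι) u => if u ∈ S then (1 : Fin 3) else 0)
  · intro s hs
    simp only [mem_filter, mem_univ, true_and] at hs
    simp only [mem_powersetCard, subset_univ, true_and, card_filter]
    rw [← hs.2]
    exact sum_congr rfl fun u _ => by have := noTwo hs.1 u; split_ifs <;> omega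
  · intro S hS
    simp only [mem_powersetCard, subset_univ, true_and] at hS
    simp only [mem_filter, mem_univ, true_and, val_ite_one_zero, sum_boole, Nat.cast_id,
      card_eq_zero, filter_eq_empty_iff]
    exact ⟨fun u _ => by split_ifs <;> simp, by simpa using hS⟩
  · intro s hs
    simp only [mem_filter, mem_univ, true_and] at hs
    funext u
    have := noTwo hs.1 u
    refine Fin.ext ?_
    simp only [val_ite_one_zero, mem_filter, mem_univ, true_and]
    split_ifs <;> omega
  · intro S _
    ext u; simp [val_ite_one_zero]
  · intro s hs
    simp only [mem_filter, mem_univ, true_and] at hs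
    congr 1; funext u
    have := noTwo hs.1 u
    simp only [mem_filter, mem_univ, true_and]
    split_ifs <;> omega

lemma sum_sum_single_add_indicator_of_notMem (g : (ι → ℤ) → M) (n : ℕ) :
    ∑ m, ∑ S ∈ powersetCard n univ with m ∉ S,
        g (Pi.single m 1 + fun u => if u ∈ S then 1 else 0) =
      (n + 1) • ∑ T ∈ powersetCard (n + 1) univ, g (fun u => if u ∈ T then 1 else 0) := by
  calc _ = ∑ m, ∑ T ∈ powersetCard (n + 1) univ with m ∈ T,
          g (fun u => if u ∈ T then 1 else 0) := by
        refine sum_congr rfl fun m _ => sum_nbij' (insert m) (fun T => T.erase m) ?_ ?_ ?_ ?_ ?_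
        · intro S hS
          simp only [mem_filter, mem_powersetCard, subset_univ, true_and] at hS ⊢
          exact ⟨by rw [card_insert_of_notMem hS.2, hS.1], mem_insert_self m S⟩
        · intro T hT
          simp only [mem_filter, mem_powersetCard, subset_univ, true_and] at hT ⊢
          exact ⟨by rw [card_erase_of_mem hT.2, hT.1, Nat.add_sub_cancel], notMem_erase m T⟩
        · intro S hS
          exact erase_insert (mem_filter.mp hS).2
        · intro T hT
          exact insert_erase (mem_filter.mp hT).2
        · intro S hS
          rw [single_add_indicator_of_notMem (mem_filter.mp hS).2]
    _ = ∑ T ∈ powersetCard (n + 1) univ, ∑ m ∈ T, g (fun u => if u ∈ T then 1 else 0) :=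
        sum_comm' (by simp [and_comm])
    _ = _ := by
        rw [smul_sum]
        refine sum_congr rfl fun T hT => ?_
        rw [sum_const, (mem_powersetCard.mp hT).2]

lemma sum_sum_single_add_indicator_of_mem (g : (ι → ℤ) → M) (n : ℕ) :
    ∑ m, ∑ S ∈ powersetCard n univ with m ∈ S,
        g (Pi.single m 1 + fun u => if u ∈ S then 1 else 0) =
      ∑ s : ι → Fin 3 with #{u | (s u : ℕ) = 2} = 1 ∧ ∑ u, (s u : ℕ) = n + 1,
        g (fun u => ((s u : ℕ) : ℤ)) := by
  rw [sum_sigma']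
  refine sum_bij (fun p _ => twoAt p.1 p.2) ?_ ?_ ?_ ?_
  · rintro ⟨m, S⟩ hmS
    simp only [mem_sigma, mem_univ, mem_filter, mem_powersetCard, subset_univ, true_and] at hmS ⊢
    refine ⟨card_eq_one.mpr ⟨m, ?_⟩, by rw [sum_val_twoAt hmS.2, hmS.1]⟩
    ext u; simp [val_twoAt_eq_two_iff]
  · rintro ⟨m, S⟩ hmS ⟨m', S'⟩ hmS' h
    simp only [mem_sigma, mem_univ, mem_filter, mem_powersetCard, subset_univ, true_and] at hmS hmS'
    obtain ⟨rfl, rfl⟩ := twoAt_injOn hmS.2 hmS'.2 h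
    rfl
  · intro s hs
    simp only [mem_filter, mem_univ, true_and] at hs
    obtain ⟨m, hm⟩ := card_eq_one.mp hs.1
    have h2 u : (s u : ℕ) = 2 ↔ u = m := by simpa using Finset.ext_iff.mp hm u
    have hmS : m ∈ ({u | 1 ≤ (s u : ℕ)} : Finset ι) := by simp [(h2 m).mpr rfl]
    have hcard := sum_val_twoAt hmS
    rw [← eq_twoAt h2, hs.2, Nat.add_right_cancel_iff] at hcard
    refine ⟨⟨m, _⟩, ?_, (eq_twoAt h2).symm⟩
    simp only [mem_sigma, mem_univ, mem_filter, mem_powersetCard, subset_univ, true_and]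
    exact ⟨hcard.symm, hmS⟩
  · rintro ⟨m, S⟩ hmS
    simp only [mem_sigma, mem_univ, mem_filter, mem_powersetCard, subset_univ, true_and] at hmS
    congr 1
    funext u
    simp only [val_twoAt hmS.2, Pi.add_apply, Pi.single_apply]
    push_cast; rfl

end Fin3Vectors

/-- `a - a_i e_i - e_j`, the in-degrees of the residual sequences counted by `GXi a b i j`. -/
def residualIn (a : Fin N → ℕ) (i j : Fin N) : Fin N → ℤ :=
  fun n => if n = i then 0 else if n = j then (a n : ℤ) - 1 else a n

lemma GXi_eq_sum_filter (a b : Fin N → ℕ) (i j : Fin N) (c : ℕ) :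
    GXi a b i j c =
      ∑ s : Fin N → Fin 3 with #{u | (s u : ℕ) = 2} = c ∧ ∑ u, (s u : ℕ) = a i,
        numGraphsZ (residualIn a i j) fun n => (b n : ℤ) - (s n : ℕ) := by
  rw [GXi, ← sum_filter]; rfl

section residual

variable (a : Fin N → ℕ) {i j : Fin N}

lemma update_decrement_eq_residualIn (hij : i ≠ j) (hj : 1 ≤ a j) :
    Function.update (fun n => ((if n = j then a j - 1 else a n : ℕ) : ℤ)) i 0 =
      residualIn a i j := by
  funext n
  by_cases hni : n = i
  · simp [residualIn, hni]
  · by_cases hnj : n = j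
    · subst hnj; simp [residualIn, hni]; omega
    · simp [residualIn, hni, hnj]

lemma update_sub_single_sub_single_eq_residualIn (hij : i ≠ j) :
    Function.update ((fun n => (a n : ℤ)) - Pi.single i 1 - Pi.single j 1) j 0 =
      residualIn a j i := by
  funext n
  by_cases hnj : n = j
  · simp [residualIn, hnj]
  · by_cases hni : n = i
    · subst hni; simp [residualIn, hnj]
    · simp [residualIn, hni, hnj]

end residual

lemma GXi_zero_eq_numGraphs (a b : Fin N → ℕ) {i j : Fin N} (hij : i ≠ j) (hj : 1 ≤ a j) :
    GXi a b i j 0 = numGraphs (fun n => if n = j then a j - 1 else a n) b := by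
  rw [GXi_eq_sum_filter]
  refine (sum_fin3_noTwo_eq_sum_powersetCard
    (fun w => numGraphsZ (residualIn a i j) fun n => (b n : ℤ) - w n) (a i)).trans ?_
  rw [numGraphs_eq_numGraphsZ, numGraphsZ_eq_card_realizers,
    card_realizers_eq_sum_powersetCard _ _ i (a i) (by simp [hij]),
    update_decrement_eq_residualIn a hij hj]
  exact sum_congr rfl fun S _ => numGraphsZ_eq_card_realizers _ _

lemma mul_numGraphs_add_GXi_one_eq_sum (a b : Fin N → ℕ) {i j : Fin N} (hij : i ≠ j)
    (hi : 1 ≤ a i) (hj : 1 ≤ a j) :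
    a j * numGraphs (fun n => if n = i then a i - 1 else a n) b + GXi a b j i 1 =
      ∑ m, numGraphsZ ((fun n => (a n : ℤ)) - Pi.single i 1 - Pi.single j 1)
        ((fun n => (b n : ℤ)) - Pi.single m 1) := by
  obtain ⟨d, hd⟩ : ∃ d, a j = d + 1 := ⟨a j - 1, by omega⟩
  set g : (Fin N → ℤ) → ℕ :=
    fun w => numGraphsZ (residualIn a j i) fun n => (b n : ℤ) - w n with hg
  have hP : numGraphs (fun n => if n = i then a i - 1 else a n) b =
      ∑ T ∈ powersetCard (d + 1) univ, g fun u => if u ∈ T then 1 else 0 := by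
    rw [numGraphs_eq_numGraphsZ, numGraphsZ_eq_card_realizers,
      card_realizers_eq_sum_powersetCard _ _ j (d + 1) (by simp [hij.symm, hd]),
      update_decrement_eq_residualIn a hij.symm hi]
    exact sum_congr rfl fun T _ => (numGraphsZ_eq_card_realizers _ _).symm
  have hX : GXi a b j i 1 =
      ∑ s : Fin N → Fin 3 with #{u | (s u : ℕ) = 2} = 1 ∧ ∑ u, (s u : ℕ) = d + 1,
        g fun u => ((s u : ℕ) : ℤ) := by
    rw [GXi_eq_sum_filter, hd]
  have hres m : numGraphsZ ((fun n => (a n : ℤ)) - Pi.single i 1 - Pi.single j 1)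
      ((fun n => (b n : ℤ)) - Pi.single m 1) =
        ∑ S ∈ powersetCard d univ, g (Pi.single m 1 + fun u => if u ∈ S then 1 else 0) := by
    rw [numGraphsZ_eq_card_realizers,
      card_realizers_eq_sum_powersetCard _ _ j d (by simp [hij.symm, hd]),
      update_sub_single_sub_single_eq_residualIn a hij]
    refine sum_congr rfl fun S _ => ?_
    simp only [hg, numGraphsZ_eq_card_realizers]
    congr 2
    funext n
    simp only [Pi.add_apply, Pi.sub_apply]
    ring
  rw [hP, hX, sum_congr rfl fun m _ => (hres m).trans
    (sum_filter_add_sum_filter_not _ (fun S => m ∈ S) _).symm]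
  rw [sum_add_distrib, sum_sum_single_add_indicator_of_mem,
    sum_sum_single_add_indicator_of_notMem, hd, add_comm, smul_eq_mul]

lemma mul_numGraphs_add_GXi_one_comm (a b : Fin N → ℕ) {i j : Fin N} (hij : i ≠ j)
    (hi : 1 ≤ a i) (hj : 1 ≤ a j) :
    a j * numGraphs (fun n => if n = i then a i - 1 else a n) b + GXi a b j i 1 =
      a i * numGraphs (fun n => if n = j then a j - 1 else a n) b + GXi a b i j 1 := by
  rw [mul_numGraphs_add_GXi_one_eq_sum a b hij hi hj,
    mul_numGraphs_add_GXi_one_eq_sum a b hij.symm hj hi, sub_right_comm]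

lemma div_eq_of_mul_add_eq_mul_add {p q x y α β : ℝ} (hp : 0 < p) (hq : q ≠ 0)
    (hα : α ≠ 0) (hβ : 0 < β) (hy : 0 ≤ y) (h : β * p + y = α * q + x) :
    p / q = α / β * ((1 + x / (α * q)) / (1 + y / (β * p))) := by
  have : 0 < β * p + y := by positivity
  field_simp
  linarith

theorem stmt_15_general (N : ℕ) (a b : Fin N → ℕ) (i j : Fin N) (hij : i ≠ j)
    (hi : 1 ≤ a i) (hj : 1 ≤ a j)
    (h0j : GXi a b j i 0 ≠ 0)
    (hden : numGraphs (fun n => if n = j then a j - 1 else a n) b ≠ 0) :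
    (numGraphs (fun n => if n = i then a i - 1 else a n) b : ℝ) /
      (numGraphs (fun n => if n = j then a j - 1 else a n) b : ℝ) =
    ((a i : ℝ) / (a j : ℝ)) *
      ((1 + (GXi a b i j 1 : ℝ) / ((a i : ℝ) * (GXi a b i j 0 : ℝ))) /
       (1 + (GXi a b j i 1 : ℝ) / ((a j : ℝ) * (GXi a b j i 0 : ℝ)))) := by
  rw [GXi_zero_eq_numGraphs a b hij.symm hi] at h0j ⊢
  rw [GXi_zero_eq_numGraphs a b hij hj]
  exact div_eq_of_mul_add_eq_mul_add (by positivity) (by exact_mod_cast hden)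
    (by positivity) (by positivity) (by positivity)
    (by exact_mod_cast mul_numGraphs_add_GXi_one_comm a b hij hi hj)

/-- Corollary 5: if `∑ a = ∑ b + 1` and `a_i, a_j ≥ 1`, then (assuming the
denominators are nonzero)
`‖G_{d_{-i}}‖ / ‖G_{d_{-j}}‖ = (a_i/a_j) ·
  (1 + ‖G_{X_{1_i}}‖/(a_i ‖G_{X_{0_i}}‖)) / (1 + ‖G_{X_{1_j}}‖/(a_j ‖G_{X_{0_j}}‖))`. -/
theorem stmt_15 (N : ℕ) (a b : Fin N → ℕ) (i j : Fin N) (hij : i ≠ j)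
    (hsum : ∑ n, a n = (∑ n, b n) + 1)
    (hi : 1 ≤ a i) (hj : 1 ≤ a j)
    (h0i : GXi a b i j 0 ≠ 0) (h0j : GXi a b j i 0 ≠ 0)
    (hden : numGraphs (fun n => if n = j then a j - 1 else a n) b ≠ 0) :
    (numGraphs (fun n => if n = i then a i - 1 else a n) b : ℝ) /
      (numGraphs (fun n => if n = j then a j - 1 else a n) b : ℝ) =
    ((a i : ℝ) / (a j : ℝ)) *
      ((1 + (GXi a b i j 1 : ℝ) / ((a i : ℝ) * (GXi a b i j 0 : ℝ))) /
       (1 + (GXi a b j i 1 : ℝ) / ((a j : ℝ) * (GXi a b j i 0 : ℝ)))) :=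
  stmt_15_general N a b i j hij hi hj h0j hden
end

section
/- Let f : {1,...,N} → [0,∞) with Σ_i f(i) = S, max f = O(S^{1/2-τ}), and r = O(S^{1/2-τ}) with r ≥ 4 and τ > 0. Then Σ over pairwise-distinct tuples (x_1,...,x_r) of ∏_{i=1}^r f(x_i) equals [Σ over tuples with x_1,x_2,x_3,x_4 free and x_5,...,x_r pairwise distinct of ∏ f(x_i) − (4r − 10) · Σ over tuples with x_1 = x_2, x_3, x_4 free and x_5,...,x_r pairwise distinct of ∏ f(x_i)] · (1 + O(S^{-4τ})). -/
/-- `DistinctFrom k x` means the coordinates `x_i` with index `i ≥ k` are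
pairwise distinct (coordinates with index `< k` are unconstrained). -/
abbrev DistinctFrom (k : ℕ) {r N : ℕ} (x : Fin r → Fin N) : Prop :=
  ∀ i j : Fin r, k ≤ (i : ℕ) → k ≤ (j : ℕ) → x i = x j → i = j

/-- `EqOnFirst k x` means the first `k` coordinates of `x` coincide. -/
abbrev EqOnFirst (k : ℕ) {r N : ℕ} (x : Fin r → Fin N) : Prop :=
  ∀ i j : Fin r, (i : ℕ) < k → (j : ℕ) < k → x i = x j

/-!
Write `A` for the weighted sum over injective tuples, `B` for the one over tuples injective on
the tail `T = {i ≥ 4}` (indices start at `0`), and `E_{ab}` for the part of `B` where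
`x_a = x_b`. Injectivity is injectivity on `T` plus `x_a ≠ x_b` for the `4r - 10` pairs `a < b`
with `a ∉ T`, so the second-order Bonferroni inequalities give
`A = B - ∑ E_{ab} + O(∑ E_{ab,cd})`.

Gluing: a coordinate `a` that is tied to another one and free otherwise can be summed out, which
costs a factor `M / S` (`M` bounds `f`, `S = ∑ f`). Hence double collisions are `O(M² B / S²)`.
When `a, b ∉ T`, `E_{ab} = E_{01}` by permuting coordinates. When `b ∈ T`, both `E_{ab}` and
`E_{01}` are at most the corresponding sums with `b` removed from `T`, which agree by symmetry,
and each falls short of it only by collisions of `b` with `T`, i.e. by `O(r M² B / S²)`.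
For `r, M = O(S^{1/2-τ})` the total error is `O(r² M² / S²) B = O(S^{-4τ}) B`, while
`(4r - 10) E_{01} ≤ 4 r M B / S ≤ B / 2` keeps the main term comparable to `B`.
-/

open Finset

section TupleSum

variable {ι α : Type*} [Fintype ι] [DecidableEq ι] [Fintype α] {f : α → ℝ} {M S : ℝ}

open scoped Classical in
noncomputable def tupleSum (f : α → ℝ) (P : (ι → α) → Prop) : ℝ :=
  ∑ x : ι → α, if P x then ∏ i, f (x i) else 0

theorem sum_ite_eq_tupleSum (f : α → ℝ) (P : (ι → α) → Prop) [DecidablePred P] :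
    (∑ x : ι → α, if P x then ∏ i, f (x i) else 0) = tupleSum f P := by
  unfold tupleSum
  congr!

theorem tupleSum_congr {P Q : (ι → α) → Prop} (h : ∀ x, P x ↔ Q x) :
    tupleSum f P = tupleSum f Q := by
  obtain rfl : P = Q := funext fun x => propext (h x)
  rfl

theorem tupleSum_eq_zero {P : (ι → α) → Prop} (h : ∀ x, ¬P x) : tupleSum f P = 0 := by
  classical
  exact sum_eq_zero fun x _ => if_neg (h x)

theorem tupleSum_nonneg (hf : ∀ a, 0 ≤ f a) (P : (ι → α) → Prop) : 0 ≤ tupleSum f P := by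
  classical
  exact sum_nonneg fun _ _ => ite_nonneg (prod_nonneg fun _ _ => hf _) le_rfl

theorem tupleSum_mono (hf : ∀ a, 0 ≤ f a) {P Q : (ι → α) → Prop} (h : ∀ x, P x → Q x) :
    tupleSum f P ≤ tupleSum f Q := by
  classical
  refine sum_le_sum fun x _ => ?_
  split_ifs with hP hQ hQ
  exacts [le_rfl, (hQ (h x hP)).elim, prod_nonneg fun _ _ => hf _, le_rfl]

theorem tupleSum_sub_of_imp {P Q : (ι → α) → Prop} (h : ∀ x, Q x → P x) :
    tupleSum f P - tupleSum f Q = tupleSum f (fun x => P x ∧ ¬Q x) := by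
  unfold tupleSum
  rw [← sum_sub_distrib]
  refine sum_congr rfl fun x _ => ?_
  by_cases hQ : Q x
  · simp [hQ, h x hQ]
  · by_cases hP : P x <;> simp [hP, hQ]

theorem tupleSum_le_sum_tupleSum {κ : Type*} (hf : ∀ a, 0 ≤ f a) (s : Finset κ)
    (Q : κ → (ι → α) → Prop) {P : (ι → α) → Prop} (h : ∀ x, P x → ∃ j ∈ s, Q j x) :
    tupleSum f P ≤ ∑ j ∈ s, tupleSum f (Q j) := by
  classical
  unfold tupleSum
  rw [sum_comm]
  refine sum_le_sum fun x _ => ?_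
  have hnn : ∀ j ∈ s, 0 ≤ if Q j x then ∏ i, f (x i) else 0 :=
    fun _ _ => ite_nonneg (prod_nonneg fun _ _ => hf _) le_rfl
  split_ifs with hP
  · obtain ⟨j, hj, hQ⟩ := h x hP
    calc ∏ i, f (x i) = if Q j x then ∏ i, f (x i) else 0 := (if_pos hQ).symm
      _ ≤ _ := single_le_sum hnn hj
  · exact sum_nonneg hnn

theorem tupleSum_comp_perm (P : (ι → α) → Prop) (σ : Equiv.Perm ι) :
    tupleSum f (fun x => P (x ∘ σ)) = tupleSum f P := by
  classical
  refine Fintype.sum_equiv (σ.symm.arrowCongr (Equiv.refl α)) _ _ fun x => ?_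
  have hx : σ.symm.arrowCongr (Equiv.refl α) x = x ∘ σ := rfl
  rw [hx, ← Equiv.prod_comp σ (fun i => f (x i))]
  rfl

theorem tupleSum_collision_eq_of_perm {P : (ι → α) → Prop} {a b c d : ι} (σ : Equiv.Perm ι)
    (ha : σ a = c) (hb : σ b = d) (hP : ∀ x, P (x ∘ σ) ↔ P x) :
    tupleSum f (fun x => x c = x d ∧ P x) = tupleSum f (fun x => x a = x b ∧ P x) := by
  refine Eq.trans ?_ (tupleSum_comp_perm _ σ)
  exact tupleSum_congr fun x => by simp [ha, hb, hP]

theorem tupleSum_collision_eq {P : (ι → α) → Prop} {a b c d : ι} (hab : a ≠ b) (hcd : c ≠ d)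
    (hP : ∀ σ : Equiv.Perm ι, (∀ i, i ≠ a → i ≠ b → i ≠ c → i ≠ d → σ i = i) →
      ∀ x, P (x ∘ σ) ↔ P x) :
    tupleSum f (fun x => x c = x d ∧ P x) = tupleSum f (fun x => x a = x b ∧ P x) := by
  have key : ∀ {c d : ι}, a ≠ d → c ≠ d →
      (∀ σ : Equiv.Perm ι, (∀ i, i ≠ a → i ≠ b → i ≠ c → i ≠ d → σ i = i) →
        ∀ x, P (x ∘ σ) ↔ P x) →
      tupleSum f (fun x => x c = x d ∧ P x) = tupleSum f (fun x => x a = x b ∧ P x) := by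
    intro c d had hcd hP
    refine tupleSum_collision_eq_of_perm (Equiv.swap a c * Equiv.swap b d) ?_ ?_ (hP _ ?_)
    · simp [Equiv.swap_apply_of_ne_of_ne hab had]
    · simp [Equiv.swap_apply_of_ne_of_ne had.symm hcd.symm]
    · intro i hia hib hic hid
      simp [Equiv.swap_apply_of_ne_of_ne hib hid, Equiv.swap_apply_of_ne_of_ne hia hic]
  by_cases had : a = d
  · rw [tupleSum_congr fun x => and_congr_left' eq_comm]
    exact key (fun h => hcd (h.symm.trans had)) hcd.symm
      fun σ hσ => hP σ fun i h₁ h₂ h₃ h₄ => hσ i h₁ h₂ h₄ h₃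
  · exact key had hcd hP

theorem sum_mul_sum_ite_apply_eq [DecidableEq α] {a b : ι} (hba : b ≠ a)
    (h : (ι → α) → ℝ) (hh : ∀ x v, h (Function.update x a v) = h x) :
    (∑ v, f v) * ∑ x : ι → α, (if x a = x b then h x else 0)
      = ∑ x : ι → α, f (x a) * h x := by
  -- `(x, v) ↦ (x[a ↦ v], x a)` is an involution trading the constraint `x a = x b` for a free
  -- value at `a`.
  let φ : (ι → α) × α → (ι → α) × α := fun p => (Function.update p.1 a p.2, p.1 a)
  let e := Function.Involutive.toPerm φ fun p => by simp [φ]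
  rw [sum_mul_sum, sum_comm, ← Fintype.sum_prod_type', ← Equiv.sum_comp e,
    Fintype.sum_prod_type]
  refine sum_congr rfl fun y _ => ?_
  have he : ∀ p, e p = φ p := fun _ => rfl
  simp [he, φ, Function.update_of_ne hba, hh]

theorem mul_tupleSum_collision_le (hf : ∀ a, 0 ≤ f a) (hM : ∀ a, f a ≤ M)
    (hS : ∑ a, f a = S) {a b : ι} (hba : b ≠ a) {P : (ι → α) → Prop}
    (hP : ∀ x v, P (Function.update x a v) ↔ P x) :
    S * tupleSum f (fun x => x a = x b ∧ P x) ≤ M * tupleSum f P := by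
  classical
  -- the summand with `f (x a)` replaced by `f (x b)`, which no longer depends on `x a`
  let h : (ι → α) → ℝ := fun x => if P x then f (x b) * ∏ i ∈ univ.erase a, f (x i) else 0
  have hprod : ∀ x : ι → α, f (x a) * ∏ i ∈ univ.erase a, f (x i) = ∏ i, f (x i) :=
    fun x => mul_prod_erase _ (fun i => f (x i)) (mem_univ a)
  have hcollision :
      tupleSum f (fun x => x a = x b ∧ P x) = ∑ x, if x a = x b then h x else 0 := by
    refine sum_congr rfl fun x _ => ?_
    by_cases hx : x a = x b
    · simp [h, hx, ← hprod x]
    · simp [hx]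
  have hh : ∀ x v, h (Function.update x a v) = h x := fun x v => by
    have : ∏ i ∈ univ.erase a, f (Function.update x a v i) = ∏ i ∈ univ.erase a, f (x i) :=
      prod_congr rfl fun i hi => by rw [Function.update_of_ne (ne_of_mem_erase hi)]
    simp [h, hP, Function.update_of_ne hba, this]
  rw [hcollision, ← hS, sum_mul_sum_ite_apply_eq hba h hh, tupleSum, mul_sum]
  refine sum_le_sum fun x _ => ?_
  by_cases hPx : P x
  · simp only [h, hPx, if_true]
    rw [mul_left_comm, hprod]
    exact mul_le_mul_of_nonneg_right (hM _) (prod_nonneg fun _ _ => hf _)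
  · simp [h, hPx]

theorem bonferroni_pointwise {κ : Type*} (t : Finset κ) {w : ℝ} (hw : 0 ≤ w) :
    w - #t * w ≤ (if #t = 0 then w else 0) ∧
      (if #t = 0 then w else 0) ≤ w - #t * w + #t.offDiag * w := by
  rw [offDiag_card]
  by_cases ht : #t = 0
  · simp [ht]
  · have hc : 1 ≤ #t := Nat.one_le_iff_ne_zero.2 ht
    have hc' : ((#t * #t - #t : ℕ) : ℝ) = (#t - 1) * #t := by
      rw [Nat.cast_sub (Nat.le_mul_of_pos_left _ hc)]
      push_cast
      ring
    have hcR : (1 : ℝ) ≤ #t := by exact_mod_cast hc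
    rw [if_neg ht, hc']
    constructor <;> nlinarith [mul_nonneg hw (sq_nonneg ((#t : ℝ) - 1))]

theorem tupleSum_bonferroni {κ : Type*} (hf : ∀ a, 0 ≤ f a) (s : Finset κ)
    (Q : κ → (ι → α) → Prop) (D : (ι → α) → Prop) :
    tupleSum f D - ∑ p ∈ s, tupleSum f (fun x => Q p x ∧ D x)
        ≤ tupleSum f (fun x => D x ∧ ∀ p ∈ s, ¬Q p x) ∧
      tupleSum f (fun x => D x ∧ ∀ p ∈ s, ¬Q p x)
        ≤ tupleSum f D - ∑ p ∈ s, tupleSum f (fun x => Q p x ∧ D x)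
          + ∑ pq ∈ s.offDiag, tupleSum f (fun x => Q pq.1 x ∧ Q pq.2 x ∧ D x) := by
  classical
  let t : (ι → α) → Finset κ := fun x => s.filter (Q · x)
  have hsingle : ∑ p ∈ s, tupleSum f (fun x => Q p x ∧ D x)
      = ∑ x, if D x then #(t x) * ∏ i, f (x i) else 0 := by
    unfold tupleSum
    rw [sum_comm]
    refine sum_congr rfl fun x _ => ?_
    by_cases hD : D x
    · simp [hD, t, ← sum_filter]
    · simp [hD]
  have hdouble : ∑ pq ∈ s.offDiag, tupleSum f (fun x => Q pq.1 x ∧ Q pq.2 x ∧ D x)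
      = ∑ x, if D x then #(t x).offDiag * ∏ i, f (x i) else 0 := by
    unfold tupleSum
    rw [sum_comm]
    refine sum_congr rfl fun x _ => ?_
    by_cases hD : D x
    · have : (t x).offDiag = s.offDiag.filter fun pq => Q pq.1 x ∧ Q pq.2 x := by
        ext pq
        simp only [t, mem_offDiag, mem_filter]
        tauto
      simp [hD, this, ← sum_filter]
    · simp [hD]
  have hnone : tupleSum f (fun x => D x ∧ ∀ p ∈ s, ¬Q p x)
      = ∑ x, if D x then (if #(t x) = 0 then ∏ i, f (x i) else 0) else 0 := by
    refine sum_congr rfl fun x _ => ?_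
    by_cases hD : D x
    · simp [hD, t, filter_eq_empty_iff, card_eq_zero]
    · simp [hD]
  rw [hsingle, hdouble, hnone, tupleSum, ← sum_sub_distrib, ← sum_add_distrib]
  constructor <;> refine sum_le_sum fun x _ => ?_ <;> by_cases hD : D x <;>
    simp only [hD, if_true, if_false, sub_zero, add_zero, le_refl]
  · exact (bonferroni_pointwise (t x) (prod_nonneg fun _ _ => hf _)).1
  · exact (bonferroni_pointwise (t x) (prod_nonneg fun _ _ => hf _)).2

end TupleSum

section InjOn

variable {ι α : Type*} [DecidableEq ι] {T : Finset ι}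

theorem injOn_update_iff {x : ι → α} {a : ι} (ha : a ∉ T) (v : α) :
    Set.InjOn (Function.update x a v) T ↔ Set.InjOn x (T : Set ι) :=
  Set.EqOn.injOn_iff fun _ hi =>
    Function.update_of_ne (ne_of_mem_of_not_mem (mem_coe.1 hi) ha) v x

theorem injOn_erase_of_injOn {x : ι → α} (h : Set.InjOn x (T : Set ι)) (b : ι) :
    Set.InjOn x (T.erase b : Set ι) :=
  h.mono (coe_subset.2 (erase_subset b T))

theorem exists_apply_eq_of_injOn_erase {x : ι → α} {b : ι} (h : Set.InjOn x (T.erase b))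
    (h' : ¬Set.InjOn x (T : Set ι)) : ∃ j ∈ T.erase b, x b = x j := by
  simp only [Set.InjOn, mem_coe] at h'
  push Not at h'
  obtain ⟨i, hi, j, hj, hij, hne⟩ := h'
  by_cases hib : i = b
  · subst hib
    exact ⟨j, mem_erase.2 ⟨Ne.symm hne, hj⟩, hij⟩
  by_cases hjb : j = b
  · subst hjb
    exact ⟨i, mem_erase.2 ⟨hib, hi⟩, hij.symm⟩
  exact (hne (h (mem_erase.2 ⟨hib, hi⟩) (mem_erase.2 ⟨hjb, hj⟩) hij)).elim

variable [Fintype ι] [Fintype α] {f : α → ℝ} {M S : ℝ}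

theorem tupleSum_collision_injOn_eq {a b c d : ι} (ha : a ∉ T) (hb : b ∉ T) (hc : c ∉ T)
    (hd : d ∉ T) (hab : a ≠ b) (hcd : c ≠ d) :
    tupleSum f (fun x => x c = x d ∧ Set.InjOn x (T : Set ι))
      = tupleSum f (fun x => x a = x b ∧ Set.InjOn x (T : Set ι)) := by
  refine tupleSum_collision_eq hab hcd fun σ hσ x => Set.EqOn.injOn_iff fun i hi => ?_
  have hi := mem_coe.1 hi
  exact congrArg x (hσ i (ne_of_mem_of_not_mem hi ha) (ne_of_mem_of_not_mem hi hb)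
    (ne_of_mem_of_not_mem hi hc) (ne_of_mem_of_not_mem hi hd))

theorem mul_tupleSum_collision_injOn_le (hf : ∀ a, 0 ≤ f a) (hM : ∀ a, f a ≤ M) (hM0 : 0 ≤ M)
    (hS : ∑ a, f a = S) {u v : ι} (huv : u ≠ v) :
    S * tupleSum f (fun x => x u = x v ∧ Set.InjOn x (T : Set ι))
      ≤ M * tupleSum f (fun x => Set.InjOn x (T : Set ι)) := by
  by_cases hu : u ∈ T
  · by_cases hv : v ∈ T
    · rw [tupleSum_eq_zero fun x h => huv (h.2 (mem_coe.2 hu) (mem_coe.2 hv) h.1), mul_zero]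
      exact mul_nonneg hM0 (tupleSum_nonneg hf _)
    · rw [tupleSum_congr fun x => and_congr_left' eq_comm]
      exact mul_tupleSum_collision_le hf hM hS huv fun x w => injOn_update_iff hv w
  · exact mul_tupleSum_collision_le hf hM hS huv.symm fun x w => injOn_update_iff hu w

theorem sq_mul_tupleSum_two_collisions_injOn_le (hf : ∀ a, 0 ≤ f a) (hM : ∀ a, f a ≤ M)
    (hM0 : 0 ≤ M) (hS : ∑ a, f a = S) {a b c d : ι} (ha : a ∉ T) (hc : c ∉ T) (hab : a ≠ b)
    (hcd : c ≠ d) (hne : ¬(a = c ∧ b = d)) (hne' : ¬(a = d ∧ b = c)) :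
    S ^ 2 * tupleSum f (fun x => x a = x b ∧ x c = x d ∧ Set.InjOn x (T : Set ι))
      ≤ M ^ 2 * tupleSum f (fun x => Set.InjOn x (T : Set ι)) := by
  have hS0 : 0 ≤ S := hS ▸ sum_nonneg fun a _ => hf a
  have glue_twice : ∀ {X Y : ℝ}, S * X ≤ M * Y →
      S * Y ≤ M * tupleSum f (fun x => Set.InjOn x (T : Set ι)) →
      S ^ 2 * X ≤ M ^ 2 * tupleSum f (fun x => Set.InjOn x (T : Set ι)) := fun h₁ h₂ =>
    calc S ^ 2 * _ = S * (S * _) := by ring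
      _ ≤ S * (M * _) := mul_le_mul_of_nonneg_left h₁ hS0
      _ = M * (S * _) := by ring
      _ ≤ M * (M * _) := mul_le_mul_of_nonneg_left h₂ hM0
      _ = M ^ 2 * _ := by ring
  by_cases hac : a = c
  · subst hac
    rw [tupleSum_congr fun x => and_congr_right fun h : x a = x b => by rw [h]]
    refine glue_twice (mul_tupleSum_collision_le hf hM hS hab.symm fun x w => ?_)
      (mul_tupleSum_collision_injOn_le hf hM hM0 hS fun h => hne ⟨rfl, h⟩)
    rw [Function.update_of_ne hab.symm, Function.update_of_ne hcd.symm, injOn_update_iff ha]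
  by_cases had : a = d
  · have hcb : c ≠ b := fun h => hne' ⟨had, h.symm⟩
    rw [tupleSum_congr fun x => and_left_comm]
    refine glue_twice (mul_tupleSum_collision_le hf hM hS hcd.symm fun x w => ?_)
      (mul_tupleSum_collision_injOn_le hf hM hM0 hS hab)
    rw [Function.update_of_ne hac, Function.update_of_ne hcb.symm, injOn_update_iff hc]
  · refine glue_twice (mul_tupleSum_collision_le hf hM hS hab.symm fun x w => ?_)
      (mul_tupleSum_collision_injOn_le hf hM hM0 hS hcd)
    rw [Function.update_of_ne (Ne.symm hac), Function.update_of_ne (Ne.symm had),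
      injOn_update_iff ha]

theorem mul_tupleSum_and_not_injOn_le {P : (ι → α) → Prop} {b : ι} {c K : ℝ}
    (hf : ∀ a, 0 ≤ f a) (hc : 0 ≤ c) (hK : 0 ≤ K)
    (hP : ∀ x, P x → Set.InjOn x (T.erase b : Set ι))
    (hcollision : ∀ j ∈ T.erase b, c * tupleSum f (fun x => x b = x j ∧ P x) ≤ K) :
    c * tupleSum f (fun x => P x ∧ ¬Set.InjOn x (T : Set ι)) ≤ #T * K :=
  calc _ ≤ c * ∑ j ∈ T.erase b, tupleSum f (fun x => x b = x j ∧ P x) :=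
        mul_le_mul_of_nonneg_left (tupleSum_le_sum_tupleSum hf _ _ fun x hx =>
          (exists_apply_eq_of_injOn_erase (hP x hx.1) hx.2).imp
            fun _ hj => ⟨hj.1, hj.2, hx.1⟩) hc
    _ ≤ ∑ j ∈ T.erase b, K := by
        rw [mul_sum]
        exact sum_le_sum hcollision
    _ ≤ _ := by
        rw [sum_const, nsmul_eq_mul]
        exact mul_le_mul_of_nonneg_right (by exact_mod_cast card_erase_le) hK

theorem tupleSum_injOn_erase_le (hf : ∀ a, 0 ≤ f a) (hM : ∀ a, f a ≤ M) (hM0 : 0 ≤ M)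
    (hS : ∑ a, f a = S) (hS0 : 0 < S) (hTM : 2 * #T * M ≤ S) (b : ι) :
    tupleSum f (fun x => Set.InjOn x (T.erase b : Set ι))
      ≤ 2 * tupleSum f (fun x => Set.InjOn x (T : Set ι)) := by
  set B' := tupleSum f (fun x => Set.InjOn x (T.erase b : Set ι))
  have hB' : 0 ≤ B' := tupleSum_nonneg hf _
  have hdiff : S * (B' - tupleSum f (fun x => Set.InjOn x (T : Set ι))) ≤ #T * (M * B') := by
    rw [tupleSum_sub_of_imp fun x h => injOn_erase_of_injOn h b]
    exact mul_tupleSum_and_not_injOn_le hf hS0.le (mul_nonneg hM0 hB') (fun x h => h)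
      fun j hj => mul_tupleSum_collision_le hf hM hS (ne_of_mem_erase hj)
        fun x w => injOn_update_iff (notMem_erase b T) w
  have hhalf : #T * (M * B') ≤ S / 2 * B' := by
    rw [← mul_assoc]
    exact mul_le_mul_of_nonneg_right (by linarith) hB'
  have : S * (B' - 2 * tupleSum f (fun x => Set.InjOn x (T : Set ι))) ≤ S * 0 := by linarith
  linarith [le_of_mul_le_mul_left this hS0]

theorem sq_mul_sub_tupleSum_collision_injOn_erase_le (hf : ∀ a, 0 ≤ f a) (hM : ∀ a, f a ≤ M)
    (hM0 : 0 ≤ M) (hS : ∑ a, f a = S) {b p q : ι} (hb : b ∈ T) (hp : p ∉ T) (hpq : p ≠ q) :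
    S ^ 2 * (tupleSum f (fun x => x p = x q ∧ Set.InjOn x (T.erase b : Set ι))
        - tupleSum f (fun x => x p = x q ∧ Set.InjOn x (T : Set ι)))
      ≤ #T * (M ^ 2 * tupleSum f (fun x => Set.InjOn x (T.erase b : Set ι))) := by
  rw [tupleSum_sub_of_imp fun x h => ⟨h.1, injOn_erase_of_injOn h.2 b⟩,
    tupleSum_congr fun x => and_congr_right fun h => not_congr (and_iff_right h.1)]
  exact mul_tupleSum_and_not_injOn_le hf (sq_nonneg S)
    (mul_nonneg (sq_nonneg M) (tupleSum_nonneg hf _)) (fun x h => h.2) fun j hj =>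
      sq_mul_tupleSum_two_collisions_injOn_le hf hM hM0 hS (notMem_erase b T)
        (fun h => hp (mem_of_mem_erase h)) (ne_of_mem_erase hj).symm hpq
        (fun h => hp (h.1 ▸ hb)) (fun h => hp (h.2 ▸ mem_of_mem_erase hj))

theorem sq_mul_abs_sub_tupleSum_collision_injOn_le (hf : ∀ a, 0 ≤ f a) (hM : ∀ a, f a ≤ M)
    (hM0 : 0 ≤ M) (hS : ∑ a, f a = S) (hS0 : 0 < S) (hTM : 2 * #T * M ≤ S) {a b c d : ι}
    (ha : a ∉ T) (hb : b ∉ T) (hc : c ∉ T) (hab : a ≠ b) (hcd : c ≠ d) :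
    S ^ 2 * |tupleSum f (fun x => x c = x d ∧ Set.InjOn x (T : Set ι))
        - tupleSum f (fun x => x a = x b ∧ Set.InjOn x (T : Set ι))|
      ≤ 2 * #T * M ^ 2 * tupleSum f (fun x => Set.InjOn x (T : Set ι)) := by
  by_cases hd : d ∉ T
  · rw [tupleSum_collision_injOn_eq ha hb hc hd hab hcd, sub_self, abs_zero, mul_zero]
    exact mul_nonneg (by positivity) (tupleSum_nonneg hf _)
  rw [not_not] at hd
  have hT' : ∀ {i}, i ∉ T → i ∉ T.erase d := fun hi h => hi (mem_of_mem_erase h)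
  -- once `d` is dropped from `T`, the two collisions are symmetric
  have hsymm := tupleSum_collision_injOn_eq (f := f) (hT' ha) (hT' hb) (hT' hc)
    (notMem_erase d T) hab hcd
  have hcd_gap := sq_mul_sub_tupleSum_collision_injOn_erase_le hf hM hM0 hS hd hc hcd
  have hab_gap := sq_mul_sub_tupleSum_collision_injOn_erase_le hf hM hM0 hS hd ha hab
  have hEcd : tupleSum f (fun x => x c = x d ∧ Set.InjOn x (T : Set ι))
      ≤ tupleSum f (fun x => x c = x d ∧ Set.InjOn x (T.erase d : Set ι)) :=
    tupleSum_mono hf fun x h => ⟨h.1, injOn_erase_of_injOn h.2 d⟩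
  have hEab : tupleSum f (fun x => x a = x b ∧ Set.InjOn x (T : Set ι))
      ≤ tupleSum f (fun x => x a = x b ∧ Set.InjOn x (T.erase d : Set ι)) :=
    tupleSum_mono hf fun x h => ⟨h.1, injOn_erase_of_injOn h.2 d⟩
  have hB' : #T * (M ^ 2 * tupleSum f (fun x => Set.InjOn x (T.erase d : Set ι)))
      ≤ 2 * #T * M ^ 2 * tupleSum f (fun x => Set.InjOn x (T : Set ι)) := by
    have := tupleSum_injOn_erase_le hf hM hM0 hS hS0 hTM d
    have : (0 : ℝ) ≤ #T * M ^ 2 := by positivity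
    nlinarith
  rw [hsymm] at hcd_gap hEcd
  rw [← abs_of_nonneg (sq_nonneg S), ← abs_mul, abs_le]
  constructor <;> nlinarith [mul_nonneg (sq_nonneg S) (sub_nonneg.2 hEcd),
    mul_nonneg (sq_nonneg S) (sub_nonneg.2 hEab)]

end InjOn

section LinearOrder

variable {ι α : Type*} [Fintype ι] [LinearOrder ι] {T : Finset ι}

def headPairs (T : Finset ι) : Finset (ι × ι) :=
  univ.filter fun p => p.1 < p.2 ∧ p.1 ∉ T

theorem injective_iff_injOn_and_headPairs (hT : IsUpperSet (T : Set ι)) {x : ι → α} :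
    Function.Injective x ↔ Set.InjOn x (T : Set ι) ∧ ∀ p ∈ headPairs T, ¬x p.1 = x p.2 := by
  refine ⟨fun h => ⟨h.injOn, fun p hp => h.ne (mem_filter.1 hp).2.1.ne⟩, fun ⟨hinj, hpairs⟩ => ?_⟩
  intro i j hij
  by_contra hne
  wlog hlt : i < j generalizing i j
  · exact this hij.symm (Ne.symm hne) (lt_of_le_of_ne (not_lt.1 hlt) (Ne.symm hne))
  by_cases hi : i ∈ T
  · exact hne (hinj (mem_coe.2 hi) (hT hlt.le (mem_coe.2 hi)) hij)
  · exact hpairs (i, j) (mem_filter.2 ⟨mem_univ _, hlt, hi⟩) hij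

variable [Fintype α] {f : α → ℝ} {M S : ℝ}

theorem sq_mul_abs_tupleSum_injective_sub_le (hf : ∀ a, 0 ≤ f a) (hM : ∀ a, f a ≤ M)
    (hM0 : 0 ≤ M) (hS : ∑ a, f a = S) (hS0 : 0 < S) (hTM : 2 * #T * M ≤ S)
    (hT : IsUpperSet (T : Set ι)) {a b : ι} (ha : a ∉ T) (hb : b ∉ T) (hab : a ≠ b) :
    S ^ 2 * |tupleSum f (fun x : ι → α => Function.Injective x)
        - (tupleSum f (fun x => Set.InjOn x (T : Set ι))
          - #(headPairs T) * tupleSum f (fun x => x a = x b ∧ Set.InjOn x (T : Set ι)))|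
      ≤ (2 * #T + #(headPairs T)) * #(headPairs T) * M ^ 2
        * tupleSum f (fun x => Set.InjOn x (T : Set ι)) := by
  set P := headPairs T
  set B := tupleSum f (fun x => Set.InjOn x (T : Set ι))
  set E := tupleSum f (fun x => x a = x b ∧ Set.InjOn x (T : Set ι))
  have hmem : ∀ p ∈ P, p.1 < p.2 ∧ p.1 ∉ T := fun p hp => (mem_filter.1 hp).2
  obtain ⟨hlow, hup⟩ := tupleSum_bonferroni hf P (fun p x => x p.1 = x p.2)
    (fun x => Set.InjOn x (T : Set ι))
  rw [← tupleSum_congr fun x => injective_iff_injOn_and_headPairs hT] at hlow hup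
  have hsingle : S ^ 2 * |∑ p ∈ P, tupleSum f (fun x => x p.1 = x p.2 ∧ Set.InjOn x (T : Set ι))
      - #P * E| ≤ #P * (2 * #T * M ^ 2 * B) :=
    calc _ = S ^ 2 * |∑ p ∈ P,
            (tupleSum f (fun x => x p.1 = x p.2 ∧ Set.InjOn x (T : Set ι)) - E)| := by
          rw [sum_sub_distrib, sum_const, nsmul_eq_mul]
      _ ≤ ∑ p ∈ P, S ^ 2 *
            |tupleSum f (fun x => x p.1 = x p.2 ∧ Set.InjOn x (T : Set ι)) - E| := by
          rw [← mul_sum]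
          exact mul_le_mul_of_nonneg_left (abs_sum_le_sum_abs _ _) (sq_nonneg S)
      _ ≤ ∑ p ∈ P, 2 * #T * M ^ 2 * B := sum_le_sum fun p hp =>
          sq_mul_abs_sub_tupleSum_collision_injOn_le hf hM hM0 hS hS0 hTM ha hb (hmem p hp).2
            hab (hmem p hp).1.ne
      _ = _ := by rw [sum_const, nsmul_eq_mul]
  have hdouble : S ^ 2 * ∑ pq ∈ P.offDiag, tupleSum f
        (fun x => x pq.1.1 = x pq.1.2 ∧ x pq.2.1 = x pq.2.2 ∧ Set.InjOn x (T : Set ι))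
      ≤ #P * #P * (M ^ 2 * B) :=
    calc _ ≤ ∑ pq ∈ P.offDiag, M ^ 2 * B := by
          rw [mul_sum]
          refine sum_le_sum fun pq hpq => ?_
          obtain ⟨hp, hq, hpq⟩ := mem_offDiag.1 hpq
          exact sq_mul_tupleSum_two_collisions_injOn_le hf hM hM0 hS (hmem _ hp).2 (hmem _ hq).2
            (hmem _ hp).1.ne (hmem _ hq).1.ne (fun h => hpq (Prod.ext h.1 h.2))
            fun ⟨h₁, h₂⟩ => lt_asymm (hmem _ hp).1 (by rw [h₁, h₂]; exact (hmem _ hq).1)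
      _ ≤ _ := by
          rw [sum_const, nsmul_eq_mul]
          refine mul_le_mul_of_nonneg_right ?_ (mul_nonneg (sq_nonneg M) (tupleSum_nonneg hf _))
          exact_mod_cast (offDiag_card P).trans_le (Nat.sub_le _ _)
  rw [← abs_of_nonneg (sq_nonneg S), ← abs_mul] at hsingle ⊢
  rw [abs_le] at hsingle ⊢
  have hS2 := sq_nonneg S
  constructor <;> nlinarith [mul_le_mul_of_nonneg_left hlow hS2, mul_le_mul_of_nonneg_left hup hS2]

end LinearOrder

section Fin

def tailFrom (k r : ℕ) : Finset (Fin r) :=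
  univ.filter fun i => k ≤ (i : ℕ)

variable {k r N : ℕ}

theorem distinctFrom_iff_injOn {x : Fin r → Fin N} :
    DistinctFrom k x ↔ Set.InjOn x (tailFrom k r : Set (Fin r)) := by
  simp only [Set.InjOn, tailFrom, coe_filter, mem_univ, true_and, Set.mem_ofPred_eq]
  exact ⟨fun h i hi j hj => h i j hi hj, fun h i j hi hj => h hi hj⟩

theorem distinctFrom_zero_iff {x : Fin r → Fin N} :
    DistinctFrom 0 x ↔ Function.Injective x := by
  simp [DistinctFrom, Function.Injective]

theorem eqOnFirst_two_iff (hr : 2 ≤ r) {x : Fin r → Fin N} :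
    EqOnFirst 2 x ↔ x ⟨0, by omega⟩ = x ⟨1, by omega⟩ := by
  refine ⟨fun h => h _ _ (by simp) (by simp), fun h i j hi hj => ?_⟩
  have hcases : ∀ i : Fin r, (i : ℕ) < 2 → i = ⟨0, by omega⟩ ∨ i = ⟨1, by omega⟩ :=
    fun i hi => by
      rcases (by omega : (i : ℕ) = 0 ∨ (i : ℕ) = 1) with h | h
      exacts [Or.inl (Fin.ext h), Or.inr (Fin.ext h)]
  rcases hcases i hi with hi | hi <;> rcases hcases j hj with hj | hj <;> rw [hi, hj]
  exacts [h, h.symm]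

theorem isUpperSet_tailFrom : IsUpperSet (tailFrom k r : Set (Fin r)) := fun i j hij hi => by
  simp only [tailFrom, coe_filter, mem_univ, true_and, Set.mem_ofPred_eq] at hi ⊢
  exact hi.trans hij

theorem card_tailFrom_le : #(tailFrom k r) ≤ r :=
  (card_filter_le _ _).trans (card_fin r).le

theorem card_headPairs_tailFrom_four (hr : 4 ≤ r) :
    #(headPairs (tailFrom 4 r)) = 4 * r - 10 := by
  obtain ⟨m, rfl⟩ : ∃ m, r = 4 + m := ⟨r - 4, by omega⟩
  have hrow : ∀ a : Fin (4 + m), #(univ.filter fun b => a < b ∧ (a : ℕ) < 4)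
      = if (a : ℕ) < 4 then 3 + m - a else 0 := fun a => by
    split_ifs with ha
    · simp [ha, filter_lt_eq_Ioi]
    · simp [ha]
  rw [headPairs, card_filter, Fintype.sum_prod_type]
  simp only [tailFrom, mem_filter, mem_univ, true_and, not_le, ← card_filter, hrow]
  rw [Fin.sum_univ_eq_sum_range (fun k => if k < 4 then 3 + m - k else 0), sum_range_add]
  simp [sum_range_succ]
  omega

theorem sq_mul_abs_tupleSum_distinctFrom_sub_le {f : Fin N → ℝ} {M S : ℝ}
    (hf : ∀ a, 0 ≤ f a) (hM : ∀ a, f a ≤ M) (hM0 : 0 ≤ M) (hS : ∑ a, f a = S) (hS0 : 0 < S)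
    (hrM : 8 * r * M ≤ S) (hr : 4 ≤ r) :
    S ^ 2 * |tupleSum f (fun x : Fin r → Fin N => DistinctFrom 0 x)
        - (tupleSum f (fun x : Fin r → Fin N => DistinctFrom 4 x) - (4 * r - 10)
          * tupleSum f (fun x : Fin r → Fin N => EqOnFirst 2 x ∧ DistinctFrom 4 x))|
      ≤ 24 * r ^ 2 * M ^ 2 * tupleSum f (fun x : Fin r → Fin N => DistinctFrom 4 x) ∧
    (4 * r - 10) * tupleSum f (fun x : Fin r → Fin N => EqOnFirst 2 x ∧ DistinctFrom 4 x)
      ≤ tupleSum f (fun x : Fin r → Fin N => DistinctFrom 4 x) / 2 := by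
  set T := tailFrom 4 r
  have h0 : (⟨0, by omega⟩ : Fin r) ∉ T := by simp [T, tailFrom]
  have h1 : (⟨1, by omega⟩ : Fin r) ∉ T := by simp [T, tailFrom]
  have h01 : (⟨0, by omega⟩ : Fin r) ≠ ⟨1, by omega⟩ := by simp
  have hT : (#T : ℝ) ≤ r := by exact_mod_cast card_tailFrom_le
  have hP : (#(headPairs T) : ℝ) = 4 * r - 10 := by
    rw [card_headPairs_tailFrom_four hr, Nat.cast_sub (by omega)]
    push_cast
    ring
  have hr4 : (4 : ℝ) ≤ r := by exact_mod_cast hr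
  rw [tupleSum_congr fun x => distinctFrom_zero_iff,
    tupleSum_congr fun x => distinctFrom_iff_injOn,
    tupleSum_congr fun x => and_congr (eqOnFirst_two_iff (by omega)) distinctFrom_iff_injOn]
  have hB := tupleSum_nonneg hf (fun x : Fin r → Fin N => Set.InjOn x (T : Set (Fin r)))
  have hmain := sq_mul_abs_tupleSum_injective_sub_le hf hM hM0 hS hS0 (by nlinarith)
    isUpperSet_tailFrom h0 h1 h01
  rw [hP] at hmain
  have hE := mul_tupleSum_collision_injOn_le (T := T) hf hM hM0 hS h01
  constructor
  · refine hmain.trans (mul_le_mul_of_nonneg_right ?_ hB)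
    have : (2 * #T + (4 * r - 10)) * (4 * r - 10) ≤ (24 * r ^ 2 : ℝ) := by nlinarith
    nlinarith
  · have hE0 := tupleSum_nonneg hf
      (fun x : Fin r → Fin N => x ⟨0, by omega⟩ = x ⟨1, by omega⟩ ∧ Set.InjOn x (T : Set (Fin r)))
    refine le_of_mul_le_mul_left ?_ hS0
    nlinarith [mul_le_mul_of_nonneg_left hE (by positivity : (0 : ℝ) ≤ 4 * r),
      mul_le_mul_of_nonneg_right hrM hB, mul_nonneg hS0.le hE0]

end Fin

theorem exists_eq_mul_one_add_of_abs_sub_le {A B D ε : ℝ} (hε : 0 ≤ ε) (hB : 0 ≤ B)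
    (hBD : B ≤ 2 * D) (h : |A - D| ≤ ε * B) : ∃ θ, |θ| ≤ 2 * ε ∧ A = D * (1 + θ) := by
  rcases (show 0 ≤ D by linarith).eq_or_lt with hD | hD
  · refine ⟨0, by simpa using hε, ?_⟩
    have hB0 : B = 0 := by linarith
    rw [← hD, hB0, mul_zero] at h
    rw [← hD]
    simpa [sub_eq_zero] using h
  · refine ⟨(A - D) / D, ?_, by field_simp; ring⟩
    rw [abs_div, abs_of_pos hD, div_le_iff₀ hD]
    nlinarith

theorem mul_le_and_sq_mul_sq_le_of_le_mul_rpow {C τ S r : ℝ} (hτ : 0 < τ)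
    (hS : max 1 ((8 * C ^ 2) ^ (2 * τ)⁻¹) ≤ S) (hr : 0 ≤ r)
    (hrM : r ≤ C * S ^ ((1 : ℝ) / 2 - τ)) :
    8 * r * (C * S ^ ((1 : ℝ) / 2 - τ)) ≤ S ∧
      r ^ 2 * (C * S ^ ((1 : ℝ) / 2 - τ)) ^ 2 ≤ C ^ 4 * S ^ (-(4 * τ)) * S ^ 2 := by
  have hS0 : 0 < S := one_pos.trans_le ((le_max_left _ _).trans hS)
  set M := C * S ^ ((1 : ℝ) / 2 - τ)
  have hM0 : 0 ≤ M := hr.trans hrM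
  have hpow : ∀ n : ℕ, (S ^ ((1 : ℝ) / 2 - τ)) ^ n = S ^ (((1 : ℝ) / 2 - τ) * n) := fun n => by
    rw [← Real.rpow_natCast, ← Real.rpow_mul hS0.le]
  have hM2 : M ^ 2 * S ^ (2 * τ) = C ^ 2 * S := by
    rw [mul_pow, mul_assoc, hpow, ← Real.rpow_add hS0]
    norm_num [show ((1 : ℝ) / 2 - τ) * 2 + 2 * τ = 1 by ring]
  have hM4 : M ^ 4 = C ^ 4 * S ^ (-(4 * τ)) * S ^ 2 := by
    rw [mul_pow, hpow, mul_assoc, ← Real.rpow_two, ← Real.rpow_add hS0]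
    norm_num [show ((1 : ℝ) / 2 - τ) * 4 = -(4 * τ) + 2 by ring]
  have hC : 8 * C ^ 2 ≤ S ^ (2 * τ) := by
    have h := Real.rpow_le_rpow (by positivity) ((le_max_right _ _).trans hS)
      (by positivity : 0 ≤ 2 * τ)
    rwa [Real.rpow_inv_rpow (by positivity) (by positivity)] at h
  have hM2S : 8 * M ^ 2 ≤ S :=
    le_of_mul_le_mul_right (by nlinarith) (Real.rpow_pos_of_pos hS0 (2 * τ))
  constructor
  · nlinarith [mul_le_mul_of_nonneg_right hrM hM0]
  · rw [← hM4]
    nlinarith [mul_le_mul hrM hrM hr hM0, sq_nonneg M]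

theorem stmt_18_general (C τ : ℝ) (hτ : 0 < τ) :
    ∃ C' > 0, ∃ S₀ : ℝ, ∀ (N r : ℕ) (f : Fin N → ℝ) (S : ℝ),
      (∀ i, 0 ≤ f i) → (∑ i, f i) = S → S₀ ≤ S →
      (∀ i, f i ≤ C * S ^ ((1 : ℝ) / 2 - τ)) →
      (r : ℝ) ≤ C * S ^ ((1 : ℝ) / 2 - τ) → 4 ≤ r →
      ∃ θ : ℝ, |θ| ≤ C' * S ^ (-(4 * τ)) ∧
        (∑ x : Fin r → Fin N,
            if DistinctFrom 0 x then ∏ i, f (x i) else 0)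
          = ((∑ x : Fin r → Fin N,
                if DistinctFrom 4 x then ∏ i, f (x i) else 0)
              - (4 * (r : ℝ) - 10) *
                (∑ x : Fin r → Fin N,
                  if EqOnFirst 2 x ∧ DistinctFrom 4 x then ∏ i, f (x i)
                  else 0)) * (1 + θ) := by
  refine ⟨48 * C ^ 4 + 1, by positivity, max 1 ((8 * C ^ 2) ^ (2 * τ)⁻¹), ?_⟩
  intro N r f S hf hS hS₀ hfM hrM hr
  have hS0 : 0 < S := one_pos.trans_le ((le_max_left _ _).trans hS₀)
  have hδ : 0 ≤ S ^ (-(4 * τ)) := Real.rpow_nonneg hS0.le _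
  obtain ⟨h8, hsq⟩ := mul_le_and_sq_mul_sq_le_of_le_mul_rpow hτ hS₀ r.cast_nonneg hrM
  obtain ⟨hest, hden⟩ := sq_mul_abs_tupleSum_distinctFrom_sub_le hf hfM
    (r.cast_nonneg.trans hrM) hS hS0 h8 hr
  simp only [sum_ite_eq_tupleSum]
  set B := tupleSum f (fun x : Fin r → Fin N => DistinctFrom 4 x)
  have hB : 0 ≤ B := tupleSum_nonneg hf _
  obtain ⟨θ, hθ, heq⟩ := exists_eq_mul_one_add_of_abs_sub_le (ε := 24 * C ^ 4 * S ^ (-(4 * τ)))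
    (by positivity) hB (by linarith)
    (le_of_mul_le_mul_left (hest.trans (by nlinarith)) (pow_pos hS0 2))
  exact ⟨θ, hθ.trans (by nlinarith), heq⟩

/-- Lemma 3 (first identity): for nonnegative `f` with `∑ f = S`,
`max f = O(S^{1/2-τ})` and `4 ≤ r = O(S^{1/2-τ})`,
`∑_{x₁≠⋯≠x_r} ∏ f(x_i)
  = [∑_{x₁,…,x₄, x₅≠⋯≠x_r} ∏ f(x_i)
     − (4r−10) ∑_{x₁=x₂,x₃,x₄, x₅≠⋯≠x_r} ∏ f(x_i)]·(1 + O(S^{-4τ}))`. -/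
theorem stmt_18 (C τ : ℝ) (hC : 0 < C) (hτ : 0 < τ) :
    ∃ C' > 0, ∃ S₀ : ℝ, ∀ (N r : ℕ) (f : Fin N → ℝ) (S : ℝ),
      (∀ i, 0 ≤ f i) → (∑ i, f i) = S → S₀ ≤ S →
      (∀ i, f i ≤ C * S ^ ((1 : ℝ) / 2 - τ)) →
      (r : ℝ) ≤ C * S ^ ((1 : ℝ) / 2 - τ) → 4 ≤ r →
      ∃ θ : ℝ, |θ| ≤ C' * S ^ (-(4 * τ)) ∧
        (∑ x : Fin r → Fin N,
            if DistinctFrom 0 x then ∏ i, f (x i) else 0)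
          = ((∑ x : Fin r → Fin N,
                if DistinctFrom 4 x then ∏ i, f (x i) else 0)
              - (4 * (r : ℝ) - 10) *
                (∑ x : Fin r → Fin N,
                  if EqOnFirst 2 x ∧ DistinctFrom 4 x then ∏ i, f (x i)
                  else 0)) * (1 + θ) :=
  stmt_18_general C τ hτ
end
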